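/- arXiv:2402.08045 — 3 statements merged into one kernel-verified Lean document; each statement's English description precedes it below -/
import Mathlib

section
/- For every p ∈ [1/2, 1) and every n ≥ 1, ‖D_n^+‖_{H^p} ≤ 2/(1-p). -/
/-!
On the unit circle the geometric sum is `(z ^ n - 1) / (z - 1)`, and Jordan's inequality
`|sin (t / 2)| ≥ |t| / π` turns this into `|D_n^+(e^{it})| ≤ π / |t|`. Integrating the majorant
`(π / |t|) ^ p` gives `‖D_n^+‖_{H^p}^p ≤ 1 / (1 - p)`. Finally
`(1 / (1 - p)) ^ (1 / p) = (1 - p) ^ (1 - 1 / p) / (1 - p)`, and `(1 - p) ^ (1 - 1 / p) ≤ 2` for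
`p ≥ 1 / 2` is, after taking logarithms, the entropy bound `-q log q ≤ (1 - q) log 2` on `(0, 1/2]`.
-/

open Real Finset MeasureTheory

theorem Function.Even.intervalIntegral_eq_two_mul {f : ℝ → ℝ} (hf : Function.Even f) {c : ℝ}
    (hfi : IntervalIntegrable f volume 0 c) :
    ∫ x in -c..c, f x = 2 * ∫ x in 0..c, f x := by
  have hfi' : IntervalIntegrable f volume (-c) 0 := by
    simpa [hf _] using ((IntervalIntegrable.iff_comp_neg).mp hfi).symm
  have hneg : ∫ x in -c..0, f x = ∫ x in 0..c, f x := by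
    simpa [hf _] using (intervalIntegral.integral_comp_neg (a := 0) (b := c) f).symm
  rw [← intervalIntegral.integral_add_adjacent_intervals hfi' hfi, hneg, two_mul]

theorem norm_geom_sum_le_of_norm_eq_one {z : ℂ} (hz : ‖z‖ = 1) (hz1 : z ≠ 1) (n : ℕ) :
    ‖∑ j ∈ range n, z ^ j‖ ≤ 2 / ‖z - 1‖ := by
  have hnum : ‖z ^ n - 1‖ ≤ 2 := by
    calc ‖z ^ n - 1‖ ≤ ‖z ^ n‖ + ‖(1 : ℂ)‖ := norm_sub_le _ _
      _ = 2 := by rw [norm_pow, hz]; norm_num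
  rw [geom_sum_eq hz1, norm_div]
  gcongr

theorem abs_div_pi_le_abs_sin_half {t : ℝ} (ht : |t| ≤ π) : |t| / π ≤ |sin (t / 2)| :=
  calc |t| / π = 2 / π * (|t| / 2) := by field_simp
    _ ≤ sin (|t| / 2) := mul_le_sin (by positivity) (by linarith)
    _ = |sin (t / 2)| := by
      rw [abs_sin_eq_sin_abs_of_abs_le_pi (by rw [abs_div, abs_two]; linarith [pi_pos]),
        abs_div, abs_two]

theorem norm_geom_sum_exp_I_mul_le {t : ℝ} (ht : |t| ≤ π) (ht0 : t ≠ 0) (n : ℕ) :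
    ‖∑ j ∈ range n, Complex.exp (Complex.I * t) ^ j‖ ≤ π / |t| := by
  have hsin : 2 * (|t| / π) ≤ ‖Complex.exp (Complex.I * t) - 1‖ := by
    rw [Complex.norm_exp_I_mul_ofReal_sub_one, norm_mul, Real.norm_eq_abs, Real.norm_eq_abs,
      abs_two]
    gcongr
    exact abs_div_pi_le_abs_sin_half ht
  have hpos : 0 < 2 * (|t| / π) := by positivity
  have hz1 : Complex.exp (Complex.I * t) ≠ 1 := by
    rw [← sub_ne_zero, ← norm_pos_iff]; linarith
  calc _ ≤ 2 / ‖Complex.exp (Complex.I * t) - 1‖ :=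
        norm_geom_sum_le_of_norm_eq_one (Complex.norm_exp_I_mul_ofReal t) hz1 n
    _ ≤ 2 / (2 * (|t| / π)) := by gcongr
    _ = π / |t| := by field_simp

theorem norm_geom_sum_exp_I_mul_neg (t : ℝ) (n : ℕ) :
    ‖∑ j ∈ range n, Complex.exp (Complex.I * (-t : ℝ)) ^ j‖
      = ‖∑ j ∈ range n, Complex.exp (Complex.I * t) ^ j‖ := by
  have hconj :
      Complex.exp (Complex.I * (-t : ℝ)) = starRingEnd ℂ (Complex.exp (Complex.I * t)) := by
    rw [← Complex.exp_conj]; simp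
  simp only [hconj, ← map_pow, ← map_sum, Complex.norm_conj]

theorem negMulLog_le_one_sub_mul_log_two {q : ℝ} (hq0 : 0 < q) (hq : q ≤ 1 / 2) :
    negMulLog q ≤ (1 - q) * log 2 := by
  have h2q : negMulLog (2 * q) ≤ 1 - 2 * q := negMulLog_le_one_sub_self (by positivity)
  have hmul : negMulLog (2 * q) = q * negMulLog 2 + 2 * negMulLog q := negMulLog_mul 2 q
  have hlog2 : 1 / 2 < log 2 := by linarith [log_two_gt_d9]
  simp only [negMulLog, neg_mul] at hmul h2q ⊢
  nlinarith

theorem one_sub_rpow_one_sub_inv_le_two {p : ℝ} (hp : p ∈ Set.Ico (1 / 2 : ℝ) 1) :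
    (1 - p) ^ (1 - 1 / p) ≤ 2 := by
  obtain ⟨hp1, hp2⟩ := hp
  have hp0 : 0 < p := by linarith
  have hq0 : 0 < 1 - p := by linarith
  have key := negMulLog_le_one_sub_mul_log_two hq0 (by linarith)
  rw [← log_le_log_iff (by positivity) two_pos, log_rpow hq0]
  rw [negMulLog, sub_sub_cancel] at key
  calc (1 - 1 / p) * log (1 - p) = -(1 - p) * log (1 - p) / p := by field_simp; ring
    _ ≤ p * log 2 / p := by gcongr
    _ = log 2 := by field_simp

theorem integral_norm_geom_sum_exp_I_mul_rpow_le {p : ℝ} (hp0 : 0 ≤ p) (hp1 : p < 1) (n : ℕ) :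
    ∫ t in (-π)..π, ‖∑ j ∈ range n, Complex.exp (Complex.I * t) ^ j‖ ^ p ≤ 2 * π / (1 - p) := by
  set F : ℝ → ℝ := fun t ↦ ‖∑ j ∈ range n, Complex.exp (Complex.I * t) ^ j‖ ^ p
  have hcont : Continuous F := by fun_prop (disch := exact Or.inr hp0)
  have heven : Function.Even F := fun t ↦ by
    simp only [F, Complex.ofReal_neg, ← norm_geom_sum_exp_I_mul_neg t n]
  have hbound : ∀ t ∈ Set.Ioo 0 π, F t ≤ π ^ p * t ^ (-p) := fun t ⟨ht0, htπ⟩ ↦ by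
    have hle := norm_geom_sum_exp_I_mul_le (by rw [abs_of_pos ht0]; exact htπ.le) ht0.ne' n
    rw [abs_of_pos ht0] at hle
    calc F t ≤ (π / t) ^ p := rpow_le_rpow (norm_nonneg _) hle hp0
      _ = π ^ p * t ^ (-p) := by rw [div_rpow pi_pos.le ht0.le, rpow_neg ht0.le, div_eq_mul_inv]
  have hmajorant : ∫ t in 0..π, π ^ p * t ^ (-p) = π / (1 - p) := by
    rw [intervalIntegral.integral_const_mul, integral_rpow (Or.inl (by linarith)),
      zero_rpow (by linarith), sub_zero, neg_add_eq_sub, ← mul_div_assoc, ← rpow_add pi_pos,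
      add_sub_cancel, rpow_one]
  calc ∫ t in (-π)..π, F t = 2 * ∫ t in 0..π, F t :=
        heven.intervalIntegral_eq_two_mul (hcont.intervalIntegrable _ _)
    _ ≤ 2 * ∫ t in 0..π, π ^ p * t ^ (-p) := by
        gcongr
        exact intervalIntegral.integral_mono_on_of_le_Ioo pi_pos.le (hcont.intervalIntegrable _ _)
          ((intervalIntegral.intervalIntegrable_rpow' (by linarith)).const_mul _) hbound
    _ = 2 * π / (1 - p) := by rw [hmajorant, mul_div_assoc]

theorem stmt_6_general (p : ℝ) (hp : p ∈ Set.Ico (1/2 : ℝ) 1) (n : ℕ) :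
    ((1 / (2 * Real.pi)) *
        ∫ t in (-Real.pi)..Real.pi,
          ‖∑ j ∈ Finset.range n, Complex.exp (Complex.I * t) ^ j‖ ^ p) ^ (1 / p)
      ≤ 2 / (1 - p) := by
  obtain ⟨hp1, hp2⟩ := hp
  have hp0 : 0 < p := by linarith
  have hq0 : 0 < 1 - p := by linarith
  have hmean : (1 / (2 * π)) *
      ∫ t in (-π)..π, ‖∑ j ∈ range n, Complex.exp (Complex.I * t) ^ j‖ ^ p ≤ 1 / (1 - p) := by
    calc _ ≤ (1 / (2 * π)) * (2 * π / (1 - p)) := by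
          gcongr; exact integral_norm_geom_sum_exp_I_mul_rpow_le hp0.le hp2 n
      _ = 1 / (1 - p) := by field_simp
  have hmean_nonneg : 0 ≤ (1 / (2 * π)) *
      ∫ t in (-π)..π, ‖∑ j ∈ range n, Complex.exp (Complex.I * t) ^ j‖ ^ p :=
    mul_nonneg (by positivity) (intervalIntegral.integral_nonneg (by linarith [pi_pos])
      fun _ _ ↦ by positivity)
  calc _ ≤ (1 / (1 - p)) ^ (1 / p) := rpow_le_rpow hmean_nonneg hmean (by positivity)
    _ = (1 - p) ^ (1 - 1 / p) / (1 - p) := by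
        rw [div_rpow zero_le_one hq0.le, one_rpow, rpow_sub hq0, rpow_one]; field_simp
    _ ≤ 2 / (1 - p) := by gcongr; exact one_sub_rpow_one_sub_inv_le_two ⟨hp1, hp2⟩

theorem stmt_6 (p : ℝ) (hp : p ∈ Set.Ico (1/2 : ℝ) 1) (n : ℕ) (hn : 1 ≤ n) :
    ((1 / (2 * Real.pi)) *
        ∫ t in (-Real.pi)..Real.pi,
          ‖∑ j ∈ Finset.range n, Complex.exp (Complex.I * t) ^ j‖ ^ p) ^ (1 / p)
      ≤ 2 / (1 - p) :=
  stmt_6_general p hp n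
end

section
/- For every p ∈ [1/2, 1) and every n ≥ 1, ‖D_n^+‖_{H^p} ≤ min(2/(1-p), log(5n)). -/
/-!
By the geometric sum and Jordan's inequality `sin (t / 2) ≥ t / π`, on `(0, π]` one has
`|D_n^+(e^{it})| ≤ min (n, π / t)`, and the integrand is even, so only `(0, π]` matters.
Integrating `(π / t) ^ p` gives the `p`-th mean `≤ 1 / (1 - p)`. Splitting at `π / n` gives
mean `|D_n^+| ≤ 1 + log n`, and concavity of `x ↦ x ^ p` (weighted AM-GM, i.e. Jensen) turns this
into `p`-th mean `≤ (1 + log n) ^ p`. It remains to check `(1 / (1 - p)) ^ (1 / p) ≤ 2 / (1 - p)`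
for `p ≥ 1 / 2` and `1 + log n ≤ log (5 n)`.
-/

open Real Finset MeasureTheory

theorem intervalIntegral.integral_neg_self_of_even {f : ℝ → ℝ} {a : ℝ}
    (heven : ∀ x, f (-x) = f x) (hf : IntervalIntegrable f volume (-a) a) :
    ∫ x in -a..a, f x = 2 * ∫ x in 0..a, f x := by
  have hzero : (0 : ℝ) ∈ Set.uIcc (-a) a := by
    rcases le_total 0 a with h | h
    · exact Set.mem_uIcc.2 (Or.inl ⟨by linarith, h⟩)
    · exact Set.mem_uIcc.2 (Or.inr ⟨h, by linarith⟩)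
  have hleft : ∫ x in -a..0, f x = ∫ x in 0..a, f x := by
    simpa [heven] using (intervalIntegral.integral_comp_neg (a := 0) (b := a) f).symm
  rw [← intervalIntegral.integral_add_adjacent_intervals
    (hf.mono_set (Set.uIcc_subset_uIcc_left hzero))
    (hf.mono_set (Set.uIcc_subset_uIcc_right hzero)), hleft]
  ring

theorem intervalIntegral.integral_rpow_le_of_integral_le {f : ℝ → ℝ} {a b p A : ℝ} (hab : a ≤ b)
    (hf0 : ∀ x ∈ Set.Icc a b, 0 ≤ f x) (hf : IntervalIntegrable f volume a b)
    (hfp : IntervalIntegrable (fun x => f x ^ p) volume a b) (hp0 : 0 ≤ p) (hp1 : p ≤ 1)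
    (hA : 0 < A) (h : ∫ x in a..b, f x ≤ (b - a) * A) :
    ∫ x in a..b, f x ^ p ≤ (b - a) * A ^ p := by
  have hAq : 0 < A ^ (1 - p) := rpow_pos_of_pos hA _
  have hamgm : ∀ x ∈ Set.Icc a b, f x ^ p * A ^ (1 - p) ≤ p * f x + (1 - p) * A := fun x hx =>
    geom_mean_le_arith_mean2_weighted hp0 (by linarith) (hf0 x hx) hA.le (by ring)
  have hint := intervalIntegral.integral_mono_on hab (hfp.mul_const _)
    ((hf.const_mul p).add intervalIntegrable_const) hamgm
  rw [intervalIntegral.integral_mul_const, intervalIntegral.integral_add (hf.const_mul p)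
    intervalIntegrable_const, intervalIntegral.integral_const_mul,
    intervalIntegral.integral_const, smul_eq_mul] at hint
  have hsplit : A = A ^ p * A ^ (1 - p) := by rw [← rpow_add hA]; simp
  rw [← mul_le_mul_iff_left₀ hAq, mul_assoc]
  nlinarith

noncomputable def dirichletNorm (n : ℕ) (t : ℝ) : ℝ :=
  ‖∑ j ∈ range n, Complex.exp (Complex.I * t) ^ j‖

theorem continuous_dirichletNorm (n : ℕ) : Continuous (dirichletNorm n) := by
  unfold dirichletNorm; fun_prop

theorem dirichletNorm_neg (n : ℕ) (t : ℝ) : dirichletNorm n (-t) = dirichletNorm n t := by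
  have hconj : Complex.exp (Complex.I * ↑(-t)) = starRingEnd ℂ (Complex.exp (Complex.I * t)) := by
    rw [← Complex.exp_conj]; simp
  simp only [dirichletNorm, hconj, ← map_pow, ← map_sum, Complex.norm_conj]

theorem dirichletNorm_le_nat (n : ℕ) (t : ℝ) : dirichletNorm n t ≤ n :=
  (norm_sum_le _ _).trans (by simp [Complex.norm_exp_I_mul_ofReal])

theorem dirichletNorm_le_pi_div {t : ℝ} (ht : 0 < t) (htπ : t ≤ π) (n : ℕ) :
    dirichletNorm n t ≤ π / t := by
  set z := Complex.exp (Complex.I * t)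
  have hz : ‖z‖ = 1 := Complex.norm_exp_I_mul_ofReal t
  -- Jordan's inequality `sin (t / 2) ≥ t / π`
  have hdist : 2 * t / π ≤ ‖z - 1‖ := by
    have hjordan := mul_le_sin (x := t / 2) (by positivity) (by linarith)
    rw [Complex.norm_exp_I_mul_ofReal_sub_one, norm_mul, Real.norm_two,
      Real.norm_of_nonneg (hjordan.trans' (by positivity))]
    calc 2 * t / π = 2 * (2 / π * (t / 2)) := by ring
      _ ≤ _ := by gcongr
  have hz1 : z ≠ 1 := by
    rintro h
    rw [h, sub_self, norm_zero] at hdist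
    exact absurd hdist (not_le.2 (by positivity))
  have hnum : ‖z ^ n - 1‖ ≤ 2 := (norm_sub_le _ _).trans (by simp [hz]; norm_num)
  calc dirichletNorm n t = ‖z ^ n - 1‖ / ‖z - 1‖ := by rw [dirichletNorm, geom_sum_eq hz1, norm_div]
    _ ≤ 2 / (2 * t / π) := div_le_div₀ (by norm_num) hnum (by positivity) hdist
    _ = π / t := by field_simp

theorem integral_dirichletNorm_rpow_le {p : ℝ} (hp0 : 0 < p) (hp1 : p < 1) (n : ℕ) :
    ∫ t in 0..π, dirichletNorm n t ^ p ≤ π / (1 - p) := by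
  calc ∫ t in 0..π, dirichletNorm n t ^ p ≤ ∫ t in 0..π, π ^ p * t ^ (-p) := by
        refine intervalIntegral.integral_mono_on_of_le_Ioo pi_pos.le
          (((continuous_dirichletNorm n).rpow_const fun _ => Or.inr hp0.le).intervalIntegrable _ _)
          ((intervalIntegral.intervalIntegrable_rpow' (by linarith)).const_mul _) fun t ht => ?_
        rw [rpow_neg ht.1.le, ← div_eq_mul_inv, ← div_rpow pi_pos.le ht.1.le]
        exact rpow_le_rpow (norm_nonneg _) (dirichletNorm_le_pi_div ht.1 ht.2.le n) hp0.le
    _ = π / (1 - p) := by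
        rw [intervalIntegral.integral_const_mul, integral_rpow (Or.inl (by linarith)),
          zero_rpow (by linarith), sub_zero, mul_div_assoc', ← rpow_add pi_pos,
          show p + (-p + 1) = 1 by ring, rpow_one, neg_add_eq_sub]

theorem integral_dirichletNorm_le {n : ℕ} (hn : 1 ≤ n) :
    ∫ t in 0..π, dirichletNorm n t ≤ π * (1 + log n) := by
  have hn0 : (0 : ℝ) < n := by exact_mod_cast hn
  have hc : 0 < π / n := by positivity
  have hcπ : π / n ≤ π := div_le_self pi_pos.le (by exact_mod_cast hn)
  have hint := (continuous_dirichletNorm n).intervalIntegrable (μ := volume)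
  have hlow : ∫ t in 0..π / n, dirichletNorm n t ≤ π :=
    calc _ ≤ ∫ t in 0..π / n, (n : ℝ) := intervalIntegral.integral_mono_on hc.le (hint _ _)
          intervalIntegrable_const fun t _ => dirichletNorm_le_nat n t
      _ = π := by simp; field_simp
  have hhigh : ∫ t in π / n..π, dirichletNorm n t ≤ π * log n :=
    calc _ ≤ ∫ t in π / n..π, π * t⁻¹ := by
          refine intervalIntegral.integral_mono_on hcπ (hint _ _)
            ((intervalIntegral.intervalIntegrable_inv (fun t ht => ?_)
              continuousOn_id).const_mul _) fun t ht => ?_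
          · rw [Set.uIcc_of_le hcπ] at ht; exact (hc.trans_le ht.1).ne'
          · rw [← div_eq_mul_inv]; exact dirichletNorm_le_pi_div (hc.trans_le ht.1) ht.2 n
      _ = π * log n := by
          rw [intervalIntegral.integral_const_mul, integral_inv_of_pos hc pi_pos]
          congr 2; field_simp
  rw [← intervalIntegral.integral_add_adjacent_intervals (hint 0 (π / n)) (hint (π / n) π)]
  linarith

theorem one_div_one_sub_rpow_one_div_le {p : ℝ} (hp : 1 / 2 ≤ p) (hp1 : p < 1) :
    (1 / (1 - p)) ^ (1 / p) ≤ 2 / (1 - p) := by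
  have hp0 : 0 < p := by linarith
  set s := 1 - p
  have hs0 : 0 < s := by linarith
  rw [← log_le_log_iff (by positivity) (by positivity), log_rpow (by positivity),
    log_div two_ne_zero hs0.ne', one_div s, log_inv]
  -- `s log (1 / (2 s)) ≤ 1 / 2 - s ≤ (1 - 2 s) log 2`; both are equalities at `p = 1 / 2`
  have hlog := log_le_sub_one_of_pos (show 0 < (2 * s)⁻¹ by positivity)
  rw [log_inv, log_mul two_ne_zero hs0.ne'] at hlog
  have hlog2 := log_two_gt_d9
  have hhalf : s * (2 * s)⁻¹ = 1 / 2 := by field_simp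
  rw [div_mul_eq_mul_div, one_mul, div_le_iff₀ hp0]
  nlinarith [mul_le_mul_of_nonneg_left hlog hs0.le]

theorem one_add_log_le_log_five_mul {x : ℝ} (hx : 0 < x) : 1 + log x ≤ log (5 * x) := by
  rw [log_mul (by norm_num) hx.ne']
  have : 1 ≤ log 5 := by
    rw [le_log_iff_exp_le (by norm_num)]
    linarith [exp_one_lt_d9]
  linarith

theorem stmt_7 (p : ℝ) (hp : p ∈ Set.Ico (1/2 : ℝ) 1) (n : ℕ) (hn : 1 ≤ n) :
    ((1 / (2 * Real.pi)) *
        ∫ t in (-Real.pi)..Real.pi,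
          ‖∑ j ∈ Finset.range n, Complex.exp (Complex.I * t) ^ j‖ ^ p) ^ (1 / p)
      ≤ min (2 / (1 - p)) (Real.log (5 * n)) := by
  obtain ⟨hp, hp1⟩ := hp
  have hp0 : 0 < p := by linarith
  have hA : 0 < 1 + log n := by
    linarith [log_nonneg (show (1 : ℝ) ≤ n by exact_mod_cast hn)]
  change ((1 / (2 * π)) * ∫ t in -π..π, dirichletNorm n t ^ p) ^ (1 / p) ≤ _
  have hcont := (continuous_dirichletNorm n).rpow_const fun _ => Or.inr hp0.le
  have hmean : (1 / (2 * π)) * ∫ t in -π..π, dirichletNorm n t ^ p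
      = π⁻¹ * ∫ t in 0..π, dirichletNorm n t ^ p := by
    rw [intervalIntegral.integral_neg_self_of_even (fun t => by rw [dirichletNorm_neg])
      (hcont.intervalIntegrable _ _)]
    field_simp
  rw [hmean]
  set M := π⁻¹ * ∫ t in 0..π, dirichletNorm n t ^ p
  have hM0 : 0 ≤ M := mul_nonneg (inv_nonneg.2 pi_pos.le)
    (intervalIntegral.integral_nonneg pi_pos.le fun t _ => rpow_nonneg (norm_nonneg _) p)
  have hMa : M ≤ 1 / (1 - p) := by
    rw [inv_mul_le_iff₀ pi_pos, ← div_eq_mul_one_div]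
    exact integral_dirichletNorm_rpow_le hp0 hp1 n
  have hMb : M ≤ (1 + log n) ^ p := by
    rw [inv_mul_le_iff₀ pi_pos]
    simpa using intervalIntegral.integral_rpow_le_of_integral_le (f := dirichletNorm n) pi_pos.le
      (fun t _ => norm_nonneg _) ((continuous_dirichletNorm n).intervalIntegrable _ _)
      (hcont.intervalIntegrable _ _) hp0.le hp1.le hA (by simpa using integral_dirichletNorm_le hn)
  refine le_min ?_ ?_
  · calc M ^ (1 / p) ≤ (1 / (1 - p)) ^ (1 / p) := by gcongr
      _ ≤ 2 / (1 - p) := one_div_one_sub_rpow_one_div_le hp hp1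
  · calc M ^ (1 / p) ≤ ((1 + log n) ^ p) ^ (1 / p) := by gcongr
      _ = 1 + log n := by rw [← rpow_mul hA.le, mul_one_div_cancel hp0.ne', rpow_one]
      _ ≤ log (5 * n) := one_add_log_le_log_five_mul (by exact_mod_cast hn)
end

section
/- For every p ∈ (0,1) and every integer n ≥ 2, ‖D_n^+‖_{H^p}^p ≥ (2^{p/2 - 1}/π^p) · (1 - n^{p-1})/(1-p). -/
open Real Finset MeasureTheory

/-!
Since `(z - 1) D(t) = z ^ n - 1` for `z = exp (i t)` and `‖z - 1‖ ≤ |t|`, we get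
`|D(t)| ≥ 2 |sin (n t / 2)| / |t|`. On `[kπ/n, (k+1)π/n]` this is at least
`2n |sin (n t / 2)| / ((k+1)π)`, and because `p < 2` and `|sin| ≤ 1` we may replace
`|sin|^p` by `sin²`, whose integral over each such interval is exactly `π / (2n)`.
Summing over `k` and comparing `∑ (k+1)^(-p)` with `∫ x^(-p)` gives the bound, even with
`2^(p-1)` in place of `2^(p/2-1)`.
-/

theorem Function.Even.integral_neg_self_eq_two_mul {f : ℝ → ℝ} (hf : Function.Even f) {a : ℝ}
    (hfi : IntervalIntegrable f volume (-a) a) : ∫ x in -a..a, f x = 2 * ∫ x in 0..a, f x := by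
  have h0 : (0 : ℝ) ∈ Set.uIcc (-a) a := by
    rcases le_total 0 a with h | h <;> simp [h]
  have hneg : ∫ x in -a..0, f x = ∫ x in 0..a, f x := by
    simpa [hf _] using (intervalIntegral.integral_comp_neg (a := 0) (b := a) f).symm
  rw [← intervalIntegral.integral_add_adjacent_intervals
    (hfi.mono_set (Set.uIcc_subset_uIcc_left h0)) (hfi.mono_set (Set.uIcc_subset_uIcc_right h0)),
    hneg, two_mul]

lemma sum_range_add_one_rpow_neg_ge {p : ℝ} (hp0 : 0 ≤ p) (hp1 : p < 1) (n : ℕ) :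
    (((n : ℝ) + 1) ^ (1 - p) - 1) / (1 - p) ≤ ∑ k ∈ range n, ((k : ℝ) + 1) ^ (-p) := by
  have hanti : AntitoneOn (fun x : ℝ => x ^ (-p)) (Set.Icc 1 (1 + n)) := fun x hx y _ hxy =>
    rpow_le_rpow_of_nonpos (by linarith [hx.1]) hxy (by linarith)
  have := hanti.integral_le_sum
  rw [integral_rpow (Or.inl (by linarith))] at this
  simpa [add_comm, sub_eq_add_neg] using this

lemma sin_mul_cos_nat_mul_pi_div_two (m : ℕ) : sin (m * π / 2) * cos (m * π / 2) = 0 := by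
  have := sin_two_mul (m * π / 2)
  rw [show 2 * (m * π / 2) = m * π by ring, sin_nat_mul_pi] at this
  linarith

lemma integral_sin_sq_nat_mul_div_two {n : ℕ} (hn : n ≠ 0) (k : ℕ) :
    ∫ t in k * π / n..(k + 1) * π / n, sin (n * t / 2) ^ 2 = π / (2 * n) := by
  have hscale : ∀ x : ℝ, n / 2 * (x * π / n) = x * π / 2 := fun x => by field_simp
  have h := intervalIntegral.integral_comp_mul_left (fun u => sin u ^ 2) (c := n / 2)
    (by positivity) (a := k * π / n) (b := ((k + 1 : ℕ) : ℝ) * π / n)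
  simp only [integral_sin_sq, hscale, sin_mul_cos_nat_mul_pi_div_two, div_mul_eq_mul_div] at h
  push_cast at h
  rw [h, smul_eq_mul]
  field_simp
  ring

/-- The paper's `D_n^+` evaluated at `e^{it}`. -/
noncomputable def dirichletPlus (n : ℕ) (t : ℝ) : ℂ :=
  ∑ j ∈ range n, Complex.exp (Complex.I * t) ^ j

namespace dirichletPlus

variable (n : ℕ)

lemma continuous_norm_rpow {p : ℝ} (hp : 0 ≤ p) : Continuous fun t => ‖dirichletPlus n t‖ ^ p := by
  unfold dirichletPlus
  fun_prop (disch := simp [hp])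

lemma norm_neg (t : ℝ) : ‖dirichletPlus n (-t)‖ = ‖dirichletPlus n t‖ := by
  have : dirichletPlus n (-t) = starRingEnd ℂ (dirichletPlus n t) := by
    simp [dirichletPlus, map_sum, ← Complex.exp_conj]
  rw [this, Complex.norm_conj]

lemma abs_two_mul_sin_le_norm_mul_abs (t : ℝ) :
    |2 * sin (n * t / 2)| ≤ ‖dirichletPlus n t‖ * |t| :=
  calc |2 * sin (n * t / 2)| = ‖Complex.exp (Complex.I * t) ^ n - 1‖ := by
        rw [← Complex.exp_nat_mul, show (n : ℂ) * (Complex.I * t) = Complex.I * ((n * t : ℝ)) by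
          push_cast; ring, Complex.norm_exp_I_mul_ofReal_sub_one, Real.norm_eq_abs]
    _ = ‖dirichletPlus n t‖ * ‖Complex.exp (Complex.I * t) - 1‖ := by
        rw [dirichletPlus, ← norm_mul, geom_sum_mul]
    _ ≤ ‖dirichletPlus n t‖ * |t| := by
        gcongr
        exact norm_exp_I_mul_ofReal_sub_one_le

lemma rpow_mul_sin_sq_le_norm_rpow {p L t : ℝ} (hp0 : 0 ≤ p) (hp2 : p ≤ 2) (hL : 0 < L)
    (ht : |t| ≤ L) : (2 / L) ^ p * sin (n * t / 2) ^ 2 ≤ ‖dirichletPlus n t‖ ^ p := by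
  set s := |sin (n * t / 2)|
  have hs : s ^ (2 : ℝ) ≤ s ^ p :=
    rpow_le_rpow_of_exponent_ge' (abs_nonneg _) (abs_sin_le_one _) hp0 hp2
  have hD : 2 / L * s ≤ ‖dirichletPlus n t‖ := by
    rw [div_mul_eq_mul_div, div_le_iff₀ hL]
    calc 2 * s = |2 * sin (n * t / 2)| := by simp [s, abs_mul]
      _ ≤ ‖dirichletPlus n t‖ * |t| := abs_two_mul_sin_le_norm_mul_abs n t
      _ ≤ ‖dirichletPlus n t‖ * L := by gcongr
  calc (2 / L) ^ p * sin (n * t / 2) ^ 2 = (2 / L) ^ p * s ^ (2 : ℝ) := by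
        rw [rpow_two, sq_abs]
    _ ≤ (2 / L) ^ p * s ^ p := by gcongr
    _ = (2 / L * s) ^ p := (mul_rpow (by positivity) (abs_nonneg _)).symm
    _ ≤ ‖dirichletPlus n t‖ ^ p := by gcongr

variable {n}

lemma rpow_mul_le_integral_norm_rpow (hn : n ≠ 0) {p : ℝ} (hp0 : 0 ≤ p) (hp2 : p ≤ 2) (k : ℕ) :
    (2 * n / π) ^ p * (π / (2 * n)) * ((k : ℝ) + 1) ^ (-p)
      ≤ ∫ t in k * π / n..(k + 1) * π / n, ‖dirichletPlus n t‖ ^ p := by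
  have hL : 0 < (k + 1) * π / n := by positivity
  have hc : (2 / ((k + 1) * π / n)) ^ p = (2 * n / π) ^ p * ((k : ℝ) + 1) ^ (-p) := by
    rw [show 2 / ((k + 1) * π / n) = 2 * n / π / (k + 1) by field_simp,
      div_rpow (by positivity) (by positivity), rpow_neg (by positivity), div_eq_mul_inv]
  have hab : k * π / n ≤ (k + 1) * π / n := by gcongr; linarith
  calc (2 * n / π) ^ p * (π / (2 * n)) * ((k : ℝ) + 1) ^ (-p)
      = ∫ t in k * π / n..(k + 1) * π / n, (2 / ((k + 1) * π / n)) ^ p * sin (n * t / 2) ^ 2 := by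
        rw [intervalIntegral.integral_const_mul, integral_sin_sq_nat_mul_div_two hn, hc]
        ring
    _ ≤ ∫ t in k * π / n..(k + 1) * π / n, ‖dirichletPlus n t‖ ^ p := by
        refine intervalIntegral.integral_mono_on hab (Continuous.intervalIntegrable (by fun_prop) _ _)
          ((continuous_norm_rpow n hp0).intervalIntegrable _ _) fun t ht => ?_
        refine rpow_mul_sin_sq_le_norm_rpow n hp0 hp2 hL (abs_le.mpr ⟨?_, ht.2⟩)
        linarith [ht.1, show 0 ≤ k * π / n by positivity]

lemma rpow_mul_sum_le_integral_norm_rpow (hn : n ≠ 0) {p : ℝ} (hp0 : 0 ≤ p) (hp2 : p ≤ 2) :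
    (2 * n / π) ^ p * (π / (2 * n)) * ∑ k ∈ range n, ((k : ℝ) + 1) ^ (-p)
      ≤ ∫ t in 0..π, ‖dirichletPlus n t‖ ^ p := by
  have hadj := intervalIntegral.sum_integral_adjacent_intervals (a := fun k : ℕ => k * π / n)
    (n := n) (fun k _ => (continuous_norm_rpow n hp0).intervalIntegrable (μ := volume) _ _)
  simp only [Nat.cast_add, Nat.cast_one, Nat.cast_zero, zero_mul, zero_div] at hadj
  rw [mul_div_cancel_left₀ π (by exact_mod_cast hn : (n : ℝ) ≠ 0)] at hadj
  rw [← hadj, mul_sum]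
  exact sum_le_sum fun k _ => rpow_mul_le_integral_norm_rpow hn hp0 hp2 k

lemma two_rpow_sub_one_div_pi_rpow_mul_le_integral (hn : n ≠ 0) {p : ℝ}
    (hp : p ∈ Set.Ioo (0 : ℝ) 1) :
    2 ^ (p - 1) / π ^ p * ((1 - (n : ℝ) ^ (p - 1)) / (1 - p))
      ≤ 1 / π * ∫ t in 0..π, ‖dirichletPlus n t‖ ^ p := by
  obtain ⟨hp0, hp1⟩ := hp
  have hn' : (0 : ℝ) < n := by positivity
  have hscale : 2 ^ (p - 1) / π ^ p * (1 - (n : ℝ) ^ (p - 1))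
      = 1 / π * ((2 * n / π) ^ p * (π / (2 * n)) * ((n : ℝ) ^ (1 - p) - 1)) := by
    rw [div_rpow (by positivity) pi_pos.le, mul_rpow zero_le_two hn'.le, rpow_sub zero_lt_two,
      rpow_sub hn', rpow_sub hn', rpow_one, rpow_one]
    field_simp
  have hsum : ((n : ℝ) ^ (1 - p) - 1) / (1 - p) ≤ ∑ k ∈ range n, ((k : ℝ) + 1) ^ (-p) :=
    le_trans (by gcongr; linarith) (sum_range_add_one_rpow_neg_ge hp0.le hp1 n)
  calc 2 ^ (p - 1) / π ^ p * ((1 - (n : ℝ) ^ (p - 1)) / (1 - p))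
      = 1 / π * ((2 * n / π) ^ p * (π / (2 * n)) * (((n : ℝ) ^ (1 - p) - 1) / (1 - p))) := by
        rw [← mul_div_assoc, hscale]
        ring
    _ ≤ 1 / π * ((2 * n / π) ^ p * (π / (2 * n)) * ∑ k ∈ range n, ((k : ℝ) + 1) ^ (-p)) := by
        gcongr
    _ ≤ 1 / π * ∫ t in 0..π, ‖dirichletPlus n t‖ ^ p := by
        gcongr
        exact rpow_mul_sum_le_integral_norm_rpow hn hp0.le (by linarith)

end dirichletPlus

theorem stmt_10 (p : ℝ) (hp : p ∈ Set.Ioo (0:ℝ) 1) (n : ℕ) (hn : 2 ≤ n) :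
    (2 : ℝ) ^ (p / 2 - 1) / Real.pi ^ p * ((1 - (n : ℝ) ^ (p - 1)) / (1 - p))
      ≤ (1 / (2 * Real.pi)) *
        ∫ t in (-Real.pi)..Real.pi,
          ‖∑ j ∈ Finset.range n, Complex.exp (Complex.I * t) ^ j‖ ^ p := by
  change _ ≤ 1 / (2 * π) * ∫ t in -π..π, ‖dirichletPlus n t‖ ^ p
  have hn0 : n ≠ 0 := by omega
  have hfactor : (0 : ℝ) ≤ (1 - (n : ℝ) ^ (p - 1)) / (1 - p) := by
    have : (n : ℝ) ^ (p - 1) ≤ 1 :=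
      rpow_le_one_of_one_le_of_nonpos (by norm_cast; omega) (by linarith [hp.2])
    exact div_nonneg (by linarith) (by linarith [hp.2])
  have heven : ∫ t in -π..π, ‖dirichletPlus n t‖ ^ p = 2 * ∫ t in 0..π, ‖dirichletPlus n t‖ ^ p :=
    Function.Even.integral_neg_self_eq_two_mul (fun t => by simp only [dirichletPlus.norm_neg])
      ((dirichletPlus.continuous_norm_rpow n hp.1.le).intervalIntegrable _ _)
  calc 2 ^ (p / 2 - 1) / π ^ p * ((1 - (n : ℝ) ^ (p - 1)) / (1 - p))
      ≤ 2 ^ (p - 1) / π ^ p * ((1 - (n : ℝ) ^ (p - 1)) / (1 - p)) := by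
        gcongr
        · norm_num
        · linarith [hp.1]
    _ ≤ 1 / π * ∫ t in 0..π, ‖dirichletPlus n t‖ ^ p :=
        dirichletPlus.two_rpow_sub_one_div_pi_rpow_mul_le_integral hn0 hp
    _ = 1 / (2 * π) * ∫ t in -π..π, ‖dirichletPlus n t‖ ^ p := by
        rw [heven]
        field_simp
end
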